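/- Equality condition of the multi-channel entropy bound: for a uniquely decodable (q_1,…,q_n)-ary code for a source Z with distribution (p_1,…,p_m), all p_j > 0, the equality Σ_{j=1}^m p_j Σ_{i=1}^n ℓ_i^j ln q_i = H(Z) holds if and only if Σ_{i=1}^n ℓ_i^j ln q_i = −ln p_j for every j ∈ {1,…,m}, where H(Z) = −Σ_j p_j ln p_j. -/

import Mathlib

/-- Channel-wise concatenation of the codewords of a finite sequence of source symbols:
the `i`-th component is the concatenation of the `i`-th components of the codewords. -/
def encodeSeq {n m : ℕ} {q : Fin n → ℕ} (C : Fin m → ∀ i, List (Fin (q i)))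
    (s : List (Fin m)) : ∀ i, List (Fin (q i)) :=
  fun i => (s.map fun j => C j i).flatten

/-- A multi-channel source code is uniquely decodable if any two distinct finite sequences of
source symbols yield distinct channel-wise concatenations of their codewords. -/
def UniquelyDecodable {n m : ℕ} {q : Fin n → ℕ}
    (C : Fin m → ∀ i, List (Fin (q i))) : Prop :=
  Function.Injective (encodeSeq C)

/-! For a length vector `v`, put `kraftWeight q v = ∏ i, q i ^ (-v i)`. McMillan's counting
argument goes through with several channels: the `k`-th power of the Kraft sum
`∑ j, kraftWeight q ℓʲ` is a sum over the `k`-sequences of source symbols, and by unique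
decodability the sequences whose encoding has length vector `v` are at most `∏ i, q i ^ v i` in
number. Hence the `k`-th power grows only polynomially in `k`, so the Kraft sum is at most `1`.

Writing `rⱼ = exp (-∑ i, ℓᵢʲ * log (q i)) = kraftWeight q ℓʲ`, the identity
`∑ j, rⱼ * klFun (pⱼ / rⱼ) = (∑ j, pⱼ * ∑ i, ℓᵢʲ * log (q i) - H) + ∑ j, rⱼ - 1`
has nonnegative summands on the left while `∑ j, rⱼ ≤ 1`; so at equality with `H` they all
vanish, i.e. `pⱼ = rⱼ`. -/

open Finset Real Filter Topology InformationTheory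

lemma le_one_of_forall_pow_le_mul_pow {S c : ℝ} {d : ℕ}
    (h : ∀ k : ℕ, 1 ≤ k → S ^ k ≤ c * k ^ d) : S ≤ 1 := by
  by_contra! hS
  have hlim : Tendsto (fun k : ℕ => c * (k ^ d / S ^ k)) atTop (𝓝 0) := by
    simpa using (tendsto_pow_const_div_const_pow_of_one_lt d hS).const_mul c
  obtain ⟨k, hk, hk1⟩ :=
    ((hlim.eventually (gt_mem_nhds one_pos)).and (eventually_ge_atTop 1)).exists
  rw [← mul_div_assoc, div_lt_one (by positivity)] at hk
  linarith [h k hk1]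

section KraftMcMillan

variable {n m : ℕ} {q : Fin n → ℕ}

def wordLengths (w : ∀ i, List (Fin (q i))) : Fin n → ℕ := fun i => (w i).length

noncomputable def kraftWeight (q : Fin n → ℕ) (v : Fin n → ℕ) : ℝ := ∏ i, ((q i : ℝ) ^ v i)⁻¹

lemma kraftWeight_nonneg (v : Fin n → ℕ) : 0 ≤ kraftWeight q v := by
  unfold kraftWeight
  positivity

lemma kraftWeight_sum {ι : Type*} (s : Finset ι) (v : ι → Fin n → ℕ) :
    kraftWeight q (∑ t ∈ s, v t) = ∏ t ∈ s, kraftWeight q (v t) := by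
  simp only [kraftWeight, ← inv_pow]
  simp only [Finset.sum_apply, ← prod_pow_eq_pow_sum]
  exact Finset.prod_comm

lemma natCast_prod_pow_mul_kraftWeight_le_one (v : Fin n → ℕ) :
    ((∏ i, q i ^ v i : ℕ) : ℝ) * kraftWeight q v ≤ 1 := by
  push_cast
  rw [kraftWeight, ← prod_mul_distrib]
  exact prod_le_one (fun i _ => by positivity) fun i _ => mul_inv_le_one

lemma exp_neg_sum_mul_log_eq_kraftWeight (hq : ∀ i, 0 < q i) (v : Fin n → ℕ) :
    exp (-∑ i, (v i : ℝ) * log (q i)) = kraftWeight q v := by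
  simp only [kraftWeight, ← sum_neg_distrib, exp_sum, exp_neg, ← log_pow,
    exp_log (pow_pos (Nat.cast_pos.mpr (hq _)) _)]

variable (C : Fin m → ∀ i, List (Fin (q i)))

noncomputable def kraftSum : ℝ := ∑ j, kraftWeight q (wordLengths (C j))

lemma wordLengths_encodeSeq_ofFn {k : ℕ} (g : Fin k → Fin m) :
    wordLengths (encodeSeq C (List.ofFn g)) = ∑ t, wordLengths (C (g t)) := by
  ext i
  simp [wordLengths, encodeSeq, List.sum_ofFn, Finset.sum_apply]

lemma kraftSum_pow (k : ℕ) :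
    kraftSum C ^ k =
      ∑ g : Fin k → Fin m, kraftWeight q (wordLengths (encodeSeq C (List.ofFn g))) := by
  rw [kraftSum, Fintype.sum_pow]
  refine sum_congr rfl fun g _ => ?_
  rw [wordLengths_encodeSeq_ofFn, kraftWeight_sum]

variable {C}

lemma card_filter_wordLengths_encodeSeq_eq_le (hud : UniquelyDecodable C) (k : ℕ)
    (v : Fin n → ℕ) :
    #{g : Fin k → Fin m | wordLengths (encodeSeq C (List.ofFn g)) = v} ≤ ∏ i, q i ^ v i := by
  let F : {g : Fin k → Fin m // wordLengths (encodeSeq C (List.ofFn g)) = v} →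
      ∀ i, List.Vector (Fin (q i)) (v i) :=
    fun g i => ⟨encodeSeq C (List.ofFn g.1) i, congrFun g.2 i⟩
  have hF : Function.Injective F := fun g g' h =>
    Subtype.ext <| List.ofFn_injective <| hud <| funext fun i =>
      congrArg Subtype.val (congrFun h i)
  simpa [Fintype.card_subtype, Fintype.card_pi, card_vector] using
    Fintype.card_le_of_injective F hF

lemma sum_filter_wordLengths_encodeSeq_eq_kraftWeight_le_one (hud : UniquelyDecodable C)
    (k : ℕ) (v : Fin n → ℕ) :
    ∑ g : Fin k → Fin m with wordLengths (encodeSeq C (List.ofFn g)) = v,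
      kraftWeight q (wordLengths (encodeSeq C (List.ofFn g))) ≤ 1 := by
  rw [sum_congr rfl fun g hg => by rw [(mem_filter.mp hg).2], sum_const, nsmul_eq_mul]
  calc _ ≤ ((∏ i, q i ^ v i : ℕ) : ℝ) * kraftWeight q v := by
        gcongr
        · exact kraftWeight_nonneg v
        · exact card_filter_wordLengths_encodeSeq_eq_le hud k v
    _ ≤ 1 := natCast_prod_pow_mul_kraftWeight_le_one v

lemma kraftSum_pow_le (hud : UniquelyDecodable C) {B : ℕ} (hB : ∀ j i, (C j i).length ≤ B)
    (k : ℕ) : kraftSum C ^ k ≤ ((k * B + 1 : ℕ) : ℝ) ^ n := by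
  have hmaps : ∀ g ∈ (univ : Finset (Fin k → Fin m)),
      wordLengths (encodeSeq C (List.ofFn g)) ∈ Fintype.piFinset fun _ => range (k * B + 1) := by
    intro g _
    simp only [Fintype.mem_piFinset, mem_range, Nat.lt_succ_iff, wordLengths_encodeSeq_ofFn,
      Finset.sum_apply]
    intro i
    simpa [wordLengths] using Finset.sum_le_sum fun t (_ : t ∈ univ) => hB (g t) i
  rw [kraftSum_pow, ← sum_fiberwise_of_maps_to hmaps]
  calc _ ≤ ∑ _v ∈ Fintype.piFinset (fun _ : Fin n => range (k * B + 1)), (1 : ℝ) :=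
        sum_le_sum fun v _ => sum_filter_wordLengths_encodeSeq_eq_kraftWeight_le_one hud k v
    _ = _ := by simp

theorem kraftSum_le_one (hud : UniquelyDecodable C) : kraftSum C ≤ 1 := by
  obtain ⟨B, hB⟩ := Finite.exists_le fun x : Fin m × Fin n => (C x.1 x.2).length
  refine le_one_of_forall_pow_le_mul_pow (c := ((B : ℝ) + 1) ^ n) (d := n) fun k hk =>
    (kraftSum_pow_le hud (fun j i => hB (j, i)) k).trans ?_
  have hk' : (1 : ℝ) ≤ k := by exact_mod_cast hk
  rw [← mul_pow]
  gcongr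
  push_cast
  nlinarith

end KraftMcMillan

theorem sum_mul_eq_neg_sum_mul_log_iff {ι : Type*} [Fintype ι] {p f : ι → ℝ}
    (hp : ∀ j, 0 < p j) (hsum : ∑ j, p j = 1) (hf : ∑ j, exp (-f j) ≤ 1) :
    ∑ j, p j * f j = -∑ j, p j * log (p j) ↔ ∀ j, f j = -log (p j) := by
  refine ⟨fun heq j => ?_, fun h => by simp [h, sum_neg_distrib]⟩
  have hterm : ∀ j, exp (-f j) * klFun (p j / exp (-f j)) =
      p j * (f j + log (p j)) + exp (-f j) - p j := fun j => by
    rw [klFun_apply, log_div (hp j).ne' (exp_pos _).ne', log_exp]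
    field_simp
    ring
  have hnonneg : ∀ j ∈ univ, 0 ≤ exp (-f j) * klFun (p j / exp (-f j)) := fun j _ =>
    mul_nonneg (exp_pos _).le (klFun_nonneg (div_pos (hp j) (exp_pos _)).le)
  have hzero : ∑ j, exp (-f j) * klFun (p j / exp (-f j)) = 0 := by
    refine le_antisymm ?_ (sum_nonneg hnonneg)
    simp only [hterm, sum_sub_distrib, sum_add_distrib, mul_add, hsum]
    linarith
  have hj := (sum_eq_zero_iff_of_nonneg hnonneg).mp hzero j (mem_univ j)
  rw [mul_eq_zero, or_iff_right (exp_pos _).ne',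
    klFun_eq_zero_iff (div_pos (hp j) (exp_pos _)).le, div_eq_one_iff_eq (exp_pos _).ne'] at hj
  rw [hj, log_exp, neg_neg]

theorem multichannel_entropy_bound_equality_iff_general (n m : ℕ) (q : Fin n → ℕ)
    (hq : ∀ i, 2 ≤ q i)
    (p : Fin m → ℝ) (hp : ∀ j, 0 < p j) (hsum : ∑ j, p j = 1)
    (C : Fin m → ∀ i, List (Fin (q i)))
    (hud : UniquelyDecodable C) :
    (∑ j, p j * ∑ i, ((C j i).length : ℝ) * Real.log (q i) =
        -∑ j, p j * Real.log (p j)) ↔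
      ∀ j, ∑ i, ((C j i).length : ℝ) * Real.log (q i) = -Real.log (p j) := by
  refine sum_mul_eq_neg_sum_mul_log_iff hp hsum ?_
  refine (kraftSum_le_one hud).trans_eq' (sum_congr rfl fun j _ => ?_)
  exact (exp_neg_sum_mul_log_eq_kraftWeight (fun i => zero_lt_two.trans_le (hq i)) _).symm

/-- **Equality condition of the multi-channel entropy bound**: for a uniquely decodable
`(q 1, …, q n)`-ary code for a source with distribution `p` (all masses positive), the
expected codeword description length equals the entropy `H = -∑ j, p j * ln (p j)` if and
only if `∑ i, ℓᵢʲ * ln (q i) = - ln (p j)` for every source symbol `j`. -/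
theorem multichannel_entropy_bound_equality_iff (n m : ℕ) (q : Fin n → ℕ)
    (hq : ∀ i, 2 ≤ q i) (hmono : Monotone q)
    (p : Fin m → ℝ) (hp : ∀ j, 0 < p j) (hsum : ∑ j, p j = 1)
    (C : Fin m → ∀ i, List (Fin (q i)))
    (hud : UniquelyDecodable C) :
    (∑ j, p j * ∑ i, ((C j i).length : ℝ) * Real.log (q i) =
        -∑ j, p j * Real.log (p j)) ↔
      ∀ j, ∑ i, ((C j i).length : ℝ) * Real.log (q i) = -Real.log (p j) :=
  multichannel_entropy_bound_equality_iff_general n m q hq p hp hsum C hud
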